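/- Let J : ℝᵏ → ℝ be convex and differentiable and η > 0, and set F(θ) = J(θ) + η‖θ‖₁. A point θ* is a global minimizer of F if and only if θ* = Ψ_{αη}(θ* − α∇J(θ*)) for every (equivalently, for some) α > 0; i.e., the minimizers of F are exactly the fixed points of the iterative soft thresholding map. -/

import Mathlib

/-- scalar soft thresholding operator -/
noncomputable def softThresh (ν x : ℝ) : ℝ := Real.sign x * max (|x| - ν) 0

/-- componentwise soft thresholding on ℝᵏ -/
noncomputable def softThreshVec {k : ℕ} (ν : ℝ) (x : EuclideanSpace ℝ (Fin k)) :
    EuclideanSpace ℝ (Fin k) := WithLp.toLp 2 (fun i => softThresh ν (x i))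

/-!
A point minimizes `J + η‖·‖₁` exactly when it minimizes the linearization
`⟪∇J θ*, ·⟫ + η‖·‖₁`: one direction is the gradient inequality of the convex `J`, the other a
one-sided derivative argument along segments, where the convexity of `‖·‖₁` bounds it by its chords.
The linearized problem splits into the scalar problems `min_y g_i y + η |y|`, `g = ∇J θ*`.
On the other side, `x = Ψ_ν u` says exactly that `u - x` is a subgradient of `ν |·|` at `x`;
for `u = x - α g` and `ν = α η` this is, after dividing by `α`, the same scalar condition,
whatever `α > 0` is.
-/

open Set Filter Topology

section FirstOrder

variable {E : Type*} [NormedAddCommGroup E] [NormedSpace ℝ E]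

theorem HasFDerivAt.le_of_forall_sub_le {f : E → ℝ} {f' : E →L[ℝ] ℝ} {x d : E} {c : ℝ}
    (hf : HasFDerivAt f f' x) (h : ∀ t ∈ Ioc (0 : ℝ) 1, f (x + t • d) - f x ≤ t * c) :
    f' d ≤ c := by
  have hline : HasDerivAt (fun t : ℝ => f (x + t • d)) (f' d) 0 := by
    have hpath : HasDerivAt (fun t : ℝ => x + t • d) d 0 := by
      simpa using ((hasDerivAt_id (0 : ℝ)).smul_const d).const_add x
    exact (by simpa using hf : HasFDerivAt f f' (x + (0 : ℝ) • d)).comp_hasDerivAt 0 hpath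
  have hslope : Tendsto (slope (fun t : ℝ => f (x + t • d)) 0) (𝓝[>] 0) (𝓝 (f' d)) :=
    (hasDerivAt_iff_tendsto_slope.mp hline).mono_left (nhdsWithin_mono _ fun t ht => ne_of_gt ht)
  refine le_of_tendsto hslope ?_
  filter_upwards [Ioc_mem_nhdsGT (zero_lt_one' ℝ)] with t ht
  rw [slope_def_field, sub_zero, zero_smul, add_zero, div_le_iff₀ ht.1, mul_comm]
  exact h t ht

theorem ConvexOn.add_fderiv_sub_le {f : E → ℝ} {f' : E →L[ℝ] ℝ} {x : E}
    (hconv : ConvexOn ℝ univ f) (hf : HasFDerivAt f f' x) (y : E) :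
    f x + f' (y - x) ≤ f y := by
  have := hf.le_of_forall_sub_le (d := y - x) (c := f y - f x) fun t ht => by
    have h := hconv.2 (mem_univ x) (mem_univ y) (sub_nonneg.2 ht.2) ht.1.le (sub_add_cancel 1 t)
    rw [show (1 - t) • x + t • y = x + t • (y - x) by module, smul_eq_mul, smul_eq_mul] at h
    linarith
  linarith

theorem IsMinOn.isMinOn_fderiv_add {f h : E → ℝ} {f' : E →L[ℝ] ℝ} {x : E}
    (hmin : IsMinOn (f + h) univ x) (hf : HasFDerivAt f f' x) (hh : ConvexOn ℝ univ h) :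
    IsMinOn (⇑f' + h) univ x := by
  refine isMinOn_univ_iff.2 fun y => ?_
  have := hf.neg.le_of_forall_sub_le (d := y - x) (c := h y - h x) fun t ht => by
    have hconv := hh.2 (mem_univ x) (mem_univ y) (sub_nonneg.2 ht.2) ht.1.le (sub_add_cancel 1 t)
    rw [show (1 - t) • x + t • y = x + t • (y - x) by module, smul_eq_mul, smul_eq_mul] at hconv
    have := isMinOn_univ_iff.1 hmin (x + t • (y - x))
    simp only [Pi.add_apply, Pi.neg_apply] at this ⊢
    linarith
  simp only [Pi.add_apply, neg_apply, map_sub] at this ⊢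
  linarith

theorem isMinOn_add_iff_isMinOn_fderiv_add {f h : E → ℝ} {f' : E →L[ℝ] ℝ} {x : E}
    (hconv : ConvexOn ℝ univ f) (hf : HasFDerivAt f f' x) (hh : ConvexOn ℝ univ h) :
    IsMinOn (f + h) univ x ↔ IsMinOn (⇑f' + h) univ x := by
  refine ⟨fun hmin => hmin.isMinOn_fderiv_add hf hh, fun hmin => isMinOn_univ_iff.2 fun y => ?_⟩
  have := isMinOn_univ_iff.1 hmin y
  have := hconv.add_fderiv_sub_le hf y
  simp only [Pi.add_apply, map_sub] at *
  linarith

end FirstOrder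

theorem isMinOn_softThresh {ν : ℝ} (hν : 0 ≤ ν) (u : ℝ) :
    IsMinOn (fun y => (softThresh ν u - u) * y + ν * |y|) univ (softThresh ν u) := by
  refine isMinOn_univ_iff.2 fun y => ?_
  rcases le_or_gt |u| ν with hu | hu
  · have hx : softThresh ν u = 0 := by simp [softThresh, max_eq_right (sub_nonpos.2 hu)]
    have : |u * y| ≤ ν * |y| := by rw [abs_mul]; gcongr
    rw [hx]
    simp only [zero_sub, mul_zero, abs_zero, add_zero, neg_mul]
    linarith [le_abs_self (u * y)]
  · have hx : softThresh ν u = Real.sign u * (|u| - ν) := by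
      simp [softThresh, max_eq_left (sub_nonneg.2 hu.le)]
    rcases lt_or_gt_of_ne (abs_pos.1 (hν.trans_lt hu)) with hneg | hpos
    · rw [abs_of_neg hneg] at hu hx
      rw [hx, Real.sign_of_neg hneg, abs_of_nonpos (by linarith)]
      nlinarith [neg_abs_le y]
    · rw [abs_of_pos hpos] at hu hx
      rw [hx, Real.sign_of_pos hpos, abs_of_nonneg (by linarith)]
      nlinarith [le_abs_self y]

-- Adding the two minimality inequalities at the other point gives `(x₁ - x₂)² ≤ 0`.
theorem eq_of_isMinOn_linear_add_abs {ν u x₁ x₂ : ℝ}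
    (h₁ : IsMinOn (fun y => (x₁ - u) * y + ν * |y|) univ x₁)
    (h₂ : IsMinOn (fun y => (x₂ - u) * y + ν * |y|) univ x₂) : x₁ = x₂ := by
  have h₁₂ := isMinOn_univ_iff.1 h₁ x₂
  have h₂₁ := isMinOn_univ_iff.1 h₂ x₁
  nlinarith

theorem eq_softThresh_iff {ν u x : ℝ} (hν : 0 ≤ ν) :
    x = softThresh ν u ↔ IsMinOn (fun y => (x - u) * y + ν * |y|) univ x :=
  ⟨fun h => h ▸ isMinOn_softThresh hν u,
    fun h => eq_of_isMinOn_linear_add_abs h (isMinOn_softThresh hν u)⟩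

theorem eq_softThresh_sub_mul_iff {α η x g : ℝ} (hα : 0 < α) (hη : 0 ≤ η) :
    x = softThresh (α * η) (x - α * g) ↔ IsMinOn (fun y => g * y + η * |y|) univ x := by
  have hscale : ∀ y, (x - (x - α * g)) * y + α * η * |y| = α * (g * y + η * |y|) :=
    fun y => by ring
  simp only [eq_softThresh_iff (mul_nonneg hα.le hη), isMinOn_univ_iff, hscale,
    mul_le_mul_iff_right₀ hα]

theorem isMinOn_univ_sum_iff {ι α β : Type*} [Fintype ι] [AddCommMonoid β] [PartialOrder β]
    [IsOrderedCancelAddMonoid β] {f : ι → α → β} {x : ι → α} :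
    IsMinOn (fun z : ι → α => ∑ i, f i (z i)) univ x ↔ ∀ i, IsMinOn (f i) univ (x i) := by
  classical
  refine ⟨fun h i => isMinOn_univ_iff.2 fun y => ?_, fun h => isMinOn_univ_iff.2 fun z =>
    Finset.sum_le_sum fun i _ => isMinOn_univ_iff.1 (h i) (z i)⟩
  have hupd := isMinOn_univ_iff.1 h (Function.update x i y)
  simp only [Function.apply_update (fun j => f j) x i y] at hupd
  rw [Finset.sum_update_of_mem (Finset.mem_univ i), ← Finset.add_sum_erase _ _ (Finset.mem_univ i),
    Finset.sdiff_singleton_eq_erase] at hupd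
  exact le_of_add_le_add_right hupd

theorem convexOn_sum_abs (ι : Type*) [Fintype ι] :
    ConvexOn ℝ univ (fun z : EuclideanSpace ℝ ι => ∑ i, |z i|) := by
  refine ⟨convex_univ, fun x _ y _ a b ha hb _ => ?_⟩
  simp only [smul_eq_mul, Finset.mul_sum, ← Finset.sum_add_distrib]
  refine Finset.sum_le_sum fun i _ => ?_
  simp only [PiLp.add_apply, PiLp.smul_apply, smul_eq_mul]
  calc |a * x i + b * y i| ≤ |a * x i| + |b * y i| := abs_add_le _ _
    _ = a * |x i| + b * |y i| := by rw [abs_mul, abs_mul, abs_of_nonneg ha, abs_of_nonneg hb]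

theorem isMinOn_inner_add_sum_abs_iff {ι : Type*} [Fintype ι] (g θ : EuclideanSpace ℝ ι) (η : ℝ) :
    IsMinOn (fun z => inner ℝ g z + η * ∑ i, |z i|) univ θ ↔
      ∀ i, IsMinOn (fun y => g i * y + η * |y|) univ (θ i) := by
  rw [← isMinOn_univ_sum_iff (f := fun i y => g i * y + η * |y|), isMinOn_univ_iff,
    isMinOn_univ_iff, (WithLp.toLp_surjective 2).forall]
  simp [PiLp.inner_apply, Finset.sum_add_distrib, Finset.mul_sum, mul_comm]

theorem eq_softThreshVec_iff {k : ℕ} {ν : ℝ} {θ v : EuclideanSpace ℝ (Fin k)} :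
    θ = softThreshVec ν v ↔ ∀ i, θ i = softThresh ν (v i) :=
  PiLp.ext_iff

theorem ist_fixed_points_are_minimizers {k : ℕ}
    (J : EuclideanSpace ℝ (Fin k) → ℝ)
    (hJconv : ConvexOn ℝ Set.univ J) (hJdiff : Differentiable ℝ J)
    (η : ℝ) (hη : 0 < η)
    (F : EuclideanSpace ℝ (Fin k) → ℝ)
    (hF : F = fun θ => J θ + η * ∑ i, |θ i|)
    (θstar : EuclideanSpace ℝ (Fin k)) :
    ((∀ z, F θstar ≤ F z) ↔
        ∀ α : ℝ, 0 < α → θstar = softThreshVec (α * η) (θstar - α • gradient J θstar)) ∧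
      ((∀ z, F θstar ≤ F z) ↔
        ∃ α : ℝ, 0 < α ∧ θstar = softThreshVec (α * η) (θstar - α • gradient J θstar)) := by
  set g := gradient J θstar
  have hmin :
      (∀ z, F θstar ≤ F z) ↔ ∀ i, IsMinOn (fun y => g i * y + η * |y|) univ (θstar i) := by
    have hJ' := hasGradientAt_iff_hasFDerivAt.1 (hJdiff θstar).hasGradientAt
    have hℓ1 := (convexOn_sum_abs (Fin k)).smul hη.le
    rw [← isMinOn_univ_iff, hF, ← isMinOn_inner_add_sum_abs_iff]
    exact isMinOn_add_iff_isMinOn_fderiv_add hJconv hJ' hℓ1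
  have hfixed (α : ℝ) (hα : 0 < α) :
      θstar = softThreshVec (α * η) (θstar - α • g) ↔ (∀ z, F θstar ≤ F z) := by
    rw [hmin, eq_softThreshVec_iff]
    exact forall_congr' fun i => eq_softThresh_sub_mul_iff hα hη.le
  exact ⟨⟨fun h α hα => (hfixed α hα).2 h, fun h => (hfixed 1 one_pos).1 (h 1 one_pos)⟩,
    ⟨fun h => ⟨1, one_pos, (hfixed 1 one_pos).2 h⟩, fun ⟨α, hα, h⟩ => (hfixed α hα).1 h⟩⟩
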